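/- The direct sum S = ⊕_{n≥0} k[S_n] of symmetric group algebras, viewed inside end(T(V)) via the right place-permutation action on tensor powers of an infinite-dimensional vector space V, is closed under the smash product of endomorphisms of the tensor Hopf algebra T(V): for σ ∈ S_p and τ ∈ S_q, the smash product σ # τ is a linear combination of permutations. -/

import Mathlib

open TensorProduct DirectSum Equiv
open scoped TensorProduct

noncomputable section

variable (k V : Type*) [Field k] [AddCommGroup V] [Module k V]

/-- The (right) place-permutation action of `σ ∈ S_n` on the `n`-th tensor power:
`v₁ ⊗ ⋯ ⊗ vₙ ↦ v_{σ(1)} ⊗ ⋯ ⊗ v_{σ(n)}`. -/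
def placePerm {n : ℕ} (σ : Perm (Fin n)) : (⨂[k]^n V) →ₗ[k] ⨂[k]^n V :=
  (PiTensorProduct.reindex k (fun _ : Fin n => V) σ.symm).toLinearMap

/-- The embedding of `End(V^{⊗n})` into the graded endomorphisms of the tensor algebra
`T(V) = ⊕ₙ V^{⊗n}` (extension by zero outside degree `n`). -/
def hatEnd {n : ℕ} (f : (⨂[k]^n V) →ₗ[k] ⨂[k]^n V) :
    TensorAlgebra k V →ₗ[k] TensorAlgebra k V :=
  TensorAlgebra.equivDirectSum.symm.toLinearMap ∘ₗ
    (DirectSum.lof k ℕ (fun i => ⨂[k]^i V) n) ∘ₗ f ∘ₗ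
      (DirectSum.component k ℕ (fun i => ⨂[k]^i V) n) ∘ₗ
        TensorAlgebra.equivDirectSum.toLinearMap

/-- The coproduct of the tensor Hopf algebra `T(V)`: the unique algebra map with
`Δ(v) = v ⊗ 1 + 1 ⊗ v` for `v ∈ V`. -/
def tensorComul : TensorAlgebra k V →ₐ[k] TensorAlgebra k V ⊗[k] TensorAlgebra k V :=
  TensorAlgebra.lift k
    (((TensorProduct.mk k (TensorAlgebra k V) (TensorAlgebra k V)).flip 1) ∘ₗ
        TensorAlgebra.ι k +
      (TensorProduct.mk k (TensorAlgebra k V) (TensorAlgebra k V) 1) ∘ₗ TensorAlgebra.ι k)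

/-- Transport of a permutation along an equality of indices. -/
def permCast {m n : ℕ} (h : m = n) (σ : Perm (Fin m)) : Perm (Fin n) :=
  (finCongr h).permCongr σ

/-- The parabolic product `σ × τ` of permutations:
`(σ×τ)(i) = σ(i)` for `i ≤ p` and `τ(i-p)+p` for `i > p`. -/
def parabMul {p q : ℕ} (σ : Perm (Fin p)) (τ : Perm (Fin q)) : Perm (Fin (p + q)) :=
  finSumFinEquiv.permCongr (Equiv.sumCongr σ τ)

open scoped Classical in
/-- The set of `(u,v)`-shuffles: permutations increasing on the first `u` and on the
last `v` positions. -/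
def shuffleFinset (u v : ℕ) : Finset (Perm (Fin (u + v))) :=
  Finset.univ.filter fun ξ =>
    (∀ i j : Fin (u + v), i < j → (j : ℕ) < u → ξ i < ξ j) ∧
      ∀ i j : Fin (u + v), i < j → u ≤ (i : ℕ) → ξ i < ξ j

/-- The maximal-length shuffle `β_{u,v} ∈ Sh(u,v)`, sending `{1,…,u}` to `{v+1,…,v+u}`
and `{u+1,…,u+v}` to `{1,…,v}` order-preservingly. -/
def maxShuffle (u v : ℕ) : Perm (Fin (u + v)) :=
  (finAddFlip : Fin (u + v) ≃ Fin (v + u)).trans (finCongr (Nat.add_comm v u))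

/-- The cyclic map `(x ⊗ y) ⊗ z ↦ y ⊗ (z ⊗ x)`. -/
def cyclicMap (H : Type*) [AddCommMonoid H] [Module k H] :
    (H ⊗[k] H) ⊗[k] H →ₗ[k] H ⊗[k] (H ⊗[k] H) :=
  (LinearMap.lTensor H (TensorProduct.comm k H H).toLinearMap) ∘ₗ
    (TensorProduct.assoc k H H H).toLinearMap ∘ₗ
      (LinearMap.rTensor H (TensorProduct.comm k H H).toLinearMap)

/-- The smash product of linear endomorphisms relative to a product `m` and coproduct `Δ`:
`f # g = m ∘ (1⊗g) ∘ (1⊗m) ∘ cyclic ∘ (Δ⊗1) ∘ (f⊗1) ∘ Δ`. -/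
def smashOf {H : Type*} [AddCommMonoid H] [Module k H]
    (m : H ⊗[k] H →ₗ[k] H) (Δ : H →ₗ[k] H ⊗[k] H) (f g : H →ₗ[k] H) : H →ₗ[k] H :=
  m ∘ₗ (LinearMap.lTensor H g) ∘ₗ (LinearMap.lTensor H m) ∘ₗ cyclicMap k H ∘ₗ
    (LinearMap.rTensor H (Δ ∘ₗ f)) ∘ₗ Δ

-- Auxiliary development


/-- Products of `ι`'s indexed by a list. -/
def Pl (l : List V) : TensorAlgebra k V := (l.map fun x => TensorAlgebra.ι k x).prod

variable {α β : Type*}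

/-- All two-sided "deshuffles" of a list. -/
def splits : List α → List (List α × List α)
  | [] => [([], [])]
  | x :: l =>
      ((splits l).map fun ab => (x :: ab.1, ab.2)) ++
        ((splits l).map fun ab => (ab.1, x :: ab.2))

theorem splits_map (g : α → β) : ∀ l : List α,
    splits (l.map g) = (splits l).map fun ab => (ab.1.map g, ab.2.map g)
  | [] => rfl
  | x :: l => by
      simp [splits, splits_map g l, List.map_map, Function.comp_def]

theorem splits_perm : ∀ {l : List α} {ab : List α × List α},
    ab ∈ splits l → (ab.1 ++ ab.2).Perm l
  | [], ab, h => by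
      simp [splits] at h; subst h; rfl
  | x :: l, ab, h => by
      rw [splits, List.mem_append, List.mem_map, List.mem_map] at h
      rcases h with ⟨cd, hcd, rfl⟩ | ⟨cd, hcd, rfl⟩
      · simpa using (splits_perm hcd).cons x
      · exact List.perm_middle.trans ((splits_perm hcd).cons x)

/-- Permuting a list of length `p` by `σ ∈ S_p` (identity on other lengths). -/
def permuteList {p : ℕ} (σ : Perm (Fin p)) (l : List α) : List α :=
  if h : l.length = p then List.ofFn (fun i : Fin p => l.get (Fin.cast h.symm (σ i))) else l

theorem permuteList_perm {p : ℕ} (σ : Perm (Fin p)) (l : List α) :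
    (permuteList σ l).Perm l := by
  rw [permuteList]
  split_ifs with h
  · subst h
    have : (fun i : Fin l.length => l.get (Fin.cast rfl (σ i))) = l.get ∘ σ := by
      funext i; rfl
    rw [this]
    exact (Equiv.Perm.ofFn_comp_perm σ l.get).trans (by rw [List.ofFn_get])
  · rfl

open scoped Classical in
/-- The permutation of `Fin n` whose list of values is `J`, when `J` is a rearrangement
of `finRange n`; junk value `1` otherwise. -/
def listToPerm {n : ℕ} (J : List (Fin n)) : Perm (Fin n) :=
  if h : J.Perm (List.finRange n) then
    Equiv.ofBijective
      (fun i => J.get (Fin.cast (h.length_eq.trans List.length_finRange).symm i))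
      (Finite.injective_iff_bijective.mp
        ((List.nodup_iff_injective_get.mp (h.nodup_iff.mpr (List.nodup_finRange n))).comp
          fun a b hab => by
            have : (Fin.cast (h.length_eq.trans List.length_finRange).symm a : ℕ) =
                Fin.cast (h.length_eq.trans List.length_finRange).symm b := by rw [hab]
            exact Fin.ext (by simpa using this)))
  else 1

theorem listToPerm_apply {n : ℕ} {J : List (Fin n)} (hJ : J.Perm (List.finRange n))
    (hlen : J.length = n) (i : Fin n) :
    listToPerm J i = J.get (Fin.cast hlen.symm i) := by
  rw [listToPerm, dif_pos hJ]; rfl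

theorem tprodCast {m n : ℕ} (h : m = n) (w : Fin m → V) :
    TensorAlgebra.tprod k V m w = TensorAlgebra.tprod k V n (w ∘ Fin.cast h.symm) := by
  subst h; rfl

theorem Pl_cons (x : V) (l : List V) :
    Pl k V (x :: l) = TensorAlgebra.ι k x * Pl k V l := by simp [Pl]

theorem Pl_append (l₁ l₂ : List V) : Pl k V (l₁ ++ l₂) = Pl k V l₁ * Pl k V l₂ := by
  simp [Pl]

theorem Pl_map (v : α → V) (l : List α) :
    Pl k V (l.map v) = TensorAlgebra.tprod k V l.length (fun i => v (l.get i)) := by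
  simp only [Pl, List.map_map, TensorAlgebra.tprod_apply]
  congr 1
  rw [show ((fun x => TensorAlgebra.ι k x) ∘ v) = fun x => TensorAlgebra.ι k (v x) from rfl,
    ← List.ofFn_getElem_eq_map l (fun x => TensorAlgebra.ι k (v x))]
  simp

theorem Pl_ofFn {n : ℕ} (w : Fin n → V) :
    Pl k V (List.ofFn w) = TensorAlgebra.tprod k V n w := by
  simp [Pl, TensorAlgebra.tprod_apply, List.map_ofFn, Function.comp_def]

theorem tprod_eq_Pl {n : ℕ} (v : Fin n → V) :
    (TensorAlgebra.tprod k V n v : TensorAlgebra k V) = Pl k V ((List.finRange n).map v) := by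
  rw [← List.ofFn_eq_map, Pl_ofFn]

-- hatEnd evaluation
theorem hat_tprod_eq {n : ℕ} (h : (⨂[k]^n V) →ₗ[k] ⨂[k]^n V) (w : Fin n → V) :
    hatEnd k V h (TensorAlgebra.tprod k V n w) =
      TensorAlgebra.ofDirectSum
        (DirectSum.lof k ℕ (fun i => ⨂[k]^i V) n (h (PiTensorProduct.tprod k w))) := by
  rw [hatEnd]
  simp only [LinearMap.comp_apply, AlgEquiv.toLinearMap_apply]
  rw [TensorAlgebra.equivDirectSum_apply, TensorAlgebra.toDirectSum_tensorPower_tprod,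
    ← DirectSum.lof_eq_of k, DirectSum.component.lof_self]
  rfl

theorem hat_tprod_ne {m n : ℕ} (hmn : m ≠ n) (h : (⨂[k]^n V) →ₗ[k] ⨂[k]^n V)
    (w : Fin m → V) :
    hatEnd k V h (TensorAlgebra.tprod k V m w) = 0 := by
  rw [hatEnd]
  simp only [LinearMap.comp_apply, AlgEquiv.toLinearMap_apply]
  rw [TensorAlgebra.equivDirectSum_apply, TensorAlgebra.toDirectSum_tensorPower_tprod,
    ← DirectSum.lof_eq_of k, DirectSum.component.of, dif_neg hmn]
  simp

theorem hat_perm_apply {n : ℕ} (ρ : Perm (Fin n)) (w : Fin n → V) :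
    hatEnd k V (placePerm k V ρ) (TensorAlgebra.tprod k V n w) =
      TensorAlgebra.tprod k V n (fun i => w (ρ i)) := by
  rw [hat_tprod_eq, placePerm]
  simp only [LinearEquiv.coe_coe, PiTensorProduct.reindex_tprod, Equiv.symm_symm]
  rw [DirectSum.lof_eq_of, TensorAlgebra.ofDirectSum_of_tprod]


theorem hat_perm_list {m : ℕ} (ρ : Perm (Fin m)) (v : α → V) (A : List α) :
    hatEnd k V (placePerm k V ρ) (Pl k V (A.map v)) =
      if A.length = m then Pl k V ((permuteList ρ A).map v) else 0 := by
  rw [Pl_map]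
  by_cases h : A.length = m
  · rw [if_pos h, tprodCast k V h, hat_perm_apply, Pl_map, permuteList, dif_pos h,
      tprodCast k V (show (List.ofFn fun i : Fin m => A.get (Fin.cast h.symm (ρ i))).length = m
        by simp)]
    congr 1
    funext i
    simp [List.get_ofFn]
  · rw [if_neg h]
    exact hat_tprod_ne k V h _ _

theorem hat_listToPerm {n : ℕ} {J : List (Fin n)} (hJ : J.Perm (List.finRange n))
    (v : Fin n → V) :
    hatEnd k V (placePerm k V (listToPerm J)) (TensorAlgebra.tprod k V n v) =
      Pl k V (J.map v) := by
  have hlen : J.length = n := hJ.length_eq.trans List.length_finRange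
  rw [hat_perm_apply, Pl_map, tprodCast k V hlen]
  congr 1
  funext i
  simp [Function.comp_def, listToPerm_apply hJ hlen]

theorem comul_ι (x : V) :
    tensorComul k V (TensorAlgebra.ι k x) =
      TensorAlgebra.ι k x ⊗ₜ[k] 1 + (1 : TensorAlgebra k V) ⊗ₜ[k] TensorAlgebra.ι k x := by
  rw [tensorComul, TensorAlgebra.lift_ι_apply]
  rfl

theorem comul_Pl : ∀ l : List V,
    tensorComul k V (Pl k V l) =
      ((splits l).map fun ab => Pl k V ab.1 ⊗ₜ[k] Pl k V ab.2).sum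
  | [] => by simp [Pl, splits, Algebra.TensorProduct.one_def]
  | x :: l => by
      rw [Pl_cons, map_mul, comul_ι, comul_Pl l, splits, add_mul, List.map_append,
        List.sum_append, List.map_map, List.map_map]
      congr 1
      · rw [← List.sum_map_mul_left]
        congr 1
        apply List.map_congr_left
        intro ab _
        simp [Function.comp_def, Algebra.TensorProduct.tmul_mul_tmul, Pl_cons]
      · rw [← List.sum_map_mul_left]
        congr 1
        apply List.map_congr_left
        intro ab _
        simp [Function.comp_def, Algebra.TensorProduct.tmul_mul_tmul, Pl_cons]

theorem listSum_apply {M N : Type*} [AddCommMonoid M] [Module k M] [AddCommMonoid N]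
    [Module k N] (l : List (M →ₗ[k] N)) (x : M) :
    l.sum x = (l.map fun F => F x).sum := by
  induction l with
  | nil => simp
  | cons F l ih => simp [List.sum_cons, LinearMap.add_apply, ih]

theorem list_sum_tmul {M N : Type*} [AddCommMonoid M] [Module k M] [AddCommMonoid N]
    [Module k N] (l : List M) (y : N) :
    (l.sum ⊗ₜ[k] y : M ⊗[k] N) = (l.map fun x => x ⊗ₜ[k] y).sum := by
  rw [show (l.sum ⊗ₜ[k] y : M ⊗[k] N) = ((TensorProduct.mk k M N).flip y) l.sum from rfl,
    map_list_sum]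
  rfl

theorem list_sum_map_zero {N : Type*} [AddCommMonoid N] (l : List α) :
    ((l.map fun _ => (0 : N)).sum) = 0 := by
  induction l with
  | nil => rfl
  | cons x l ih => simp [ih]

theorem J_perm {n p q : ℕ} (σ : Perm (Fin p)) (τ : Perm (Fin q))
    {AB CD : List (Fin n) × List (Fin n)} (hAB : AB ∈ splits (List.finRange n))
    (hCD : CD ∈ splits (permuteList σ AB.1)) :
    (CD.2 ++ permuteList τ (AB.2 ++ CD.1)).Perm (List.finRange n) := by
  have h1 := splits_perm hAB
  have h2 := (splits_perm hCD).trans (permuteList_perm σ AB.1)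
  have h3 := (permuteList_perm τ (AB.2 ++ CD.1)).append_left CD.2
  refine h3.trans ?_
  rw [← Multiset.coe_eq_coe] at h1 h2 ⊢
  simp only [← Multiset.coe_add] at h1 h2 ⊢
  rw [← h1, ← h2]
  abel



/-- The value of the smash product `σ # τ` on a degree-`n` pure tensor. -/
def smashVal (p q : ℕ) (σ : Perm (Fin p)) (τ : Perm (Fin q)) {n : ℕ} (v : Fin n → V) :
    TensorAlgebra k V :=
  ((splits (List.finRange n)).map fun AB =>
    if AB.1.length = p then
      ((splits (permuteList σ AB.1)).map fun CD =>
        if (AB.2 ++ CD.1).length = q then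
          Pl k V ((CD.2 ++ permuteList τ (AB.2 ++ CD.1)).map v)
        else 0).sum
    else 0).sum

/-- The degree-`n` piece of the smash product `σ # τ`, as an explicit sum of
place-permutation operators. -/
def Gpiece (p q : ℕ) (σ : Perm (Fin p)) (τ : Perm (Fin q)) (n : ℕ) :
    TensorAlgebra k V →ₗ[k] TensorAlgebra k V :=
  ((splits (List.finRange n)).map fun AB =>
    if AB.1.length = p then
      ((splits (permuteList σ AB.1)).map fun CD =>
        if (AB.2 ++ CD.1).length = q then
          hatEnd k V (placePerm k V (listToPerm (CD.2 ++ permuteList τ (AB.2 ++ CD.1))))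
        else 0).sum
    else 0).sum

set_option maxHeartbeats 1000000 in
set_option synthInstance.maxHeartbeats 400000 in
theorem smash_eval (p q : ℕ) (σ : Perm (Fin p)) (τ : Perm (Fin q)) (n : ℕ)
    (v : Fin n → V) :
    smashOf k (LinearMap.mul' k (TensorAlgebra k V)) (tensorComul k V).toLinearMap
        (hatEnd k V (placePerm k V σ)) (hatEnd k V (placePerm k V τ))
        (TensorAlgebra.tprod k V n v) = smashVal k V p q σ τ v := by
  rw [tprod_eq_Pl, smashOf]
  simp only [LinearMap.comp_apply, AlgHom.toLinearMap_apply]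
  rw [comul_Pl, splits_map, List.map_map]
  simp only [map_list_sum, List.map_map]
  rw [smashVal]
  congr 1
  apply List.map_congr_left
  rintro ⟨A, B⟩ hAB
  simp only [Function.comp_apply, Function.comp_def]
  rw [LinearMap.rTensor_tmul, LinearMap.comp_apply, hat_perm_list]
  by_cases hA : A.length = p
  · rw [if_pos hA, if_pos hA, AlgHom.toLinearMap_apply, comul_Pl, splits_map, List.map_map,
      list_sum_tmul]
    simp only [map_list_sum, List.map_map]
    congr 1
    apply List.map_congr_left
    rintro ⟨C, D⟩ hCD
    simp only [Function.comp_apply, Function.comp_def]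
    rw [cyclicMap]
    simp only [LinearMap.comp_apply, LinearMap.rTensor_tmul, LinearMap.lTensor_tmul,
      LinearEquiv.coe_coe, TensorProduct.comm_tmul, TensorProduct.assoc_tmul]
    simp only [LinearMap.mul'_apply]
    rw [← Pl_append, ← List.map_append, hat_perm_list]
    by_cases hBC : (B ++ C).length = q
    · rw [if_pos hBC, if_pos hBC, ← Pl_append, ← List.map_append]
    · rw [if_neg hBC, if_neg hBC, mul_zero]
  · rw [if_neg hA, if_neg hA]
    simp only [map_zero, TensorProduct.zero_tmul]


theorem Gpiece_apply_tprod (p q : ℕ) (σ : Perm (Fin p)) (τ : Perm (Fin q)) (m n : ℕ)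
    (v : Fin n → V) :
    Gpiece k V p q σ τ m (TensorAlgebra.tprod k V n v) =
      if m = n then smashVal k V p q σ τ v else 0 := by
  rw [Gpiece, listSum_apply, List.map_map]
  by_cases hmn : m = n
  · subst hmn
    rw [if_pos rfl, smashVal]
    congr 1
    apply List.map_congr_left
    rintro ⟨A, B⟩ hAB
    simp only [Function.comp_apply, Function.comp_def]
    by_cases hA : A.length = p
    · rw [if_pos hA, if_pos hA, listSum_apply, List.map_map]
      congr 1
      apply List.map_congr_left
      rintro ⟨C, D⟩ hCD
      simp only [Function.comp_apply, Function.comp_def]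
      by_cases hBC : (B ++ C).length = q
      · rw [if_pos hBC, if_pos hBC, hat_listToPerm k V (J_perm σ τ hAB hCD) v]
      · rw [if_neg hBC, if_neg hBC, LinearMap.zero_apply]
    · rw [if_neg hA, if_neg hA, LinearMap.zero_apply]
  · rw [if_neg hmn]
    apply List.sum_eq_zero
    intro x hx
    rw [List.mem_map] at hx
    obtain ⟨AB, hAB, rfl⟩ := hx
    simp only [Function.comp_apply, Function.comp_def]
    by_cases hA : AB.1.length = p
    · rw [if_pos hA, listSum_apply, List.map_map]
      apply List.sum_eq_zero
      intro y hy
      rw [List.mem_map] at hy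
      obtain ⟨CD, hCD, rfl⟩ := hy
      simp only [Function.comp_apply, Function.comp_def]
      by_cases hBC : (AB.2 ++ CD.1).length = q
      · rw [if_pos hBC]
        exact hat_tprod_ne k V (fun h => hmn h.symm) _ v
      · rw [if_neg hBC, LinearMap.zero_apply]
    · rw [if_neg hA, LinearMap.zero_apply]

theorem smashVal_zero (p q : ℕ) (σ : Perm (Fin p)) (τ : Perm (Fin q)) {n : ℕ}
    (hn : p + q < n) (v : Fin n → V) :
    smashVal k V p q σ τ v = 0 := by
  rw [smashVal]
  apply List.sum_eq_zero
  intro x hx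
  rw [List.mem_map] at hx
  obtain ⟨AB, hAB, rfl⟩ := hx
  by_cases hA : AB.1.length = p
  · rw [if_pos hA]
    apply List.sum_eq_zero
    intro y hy
    rw [List.mem_map] at hy
    obtain ⟨CD, hCD, rfl⟩ := hy
    rw [if_neg]
    intro hq
    have hlen : AB.1.length + AB.2.length = n := by
      have := (splits_perm hAB).length_eq
      simpa using this
    rw [List.length_append] at hq
    omega
  · rw [if_neg hA]


/-- the direct sum `S = ⊕ₙ k[Sₙ]`, viewed inside the graded endomorphisms
of the tensor Hopf algebra `T(V)` via place permutations, is closed under the smash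
product of endomorphisms: for `σ ∈ S_p` and `τ ∈ S_q`, `σ # τ` is a linear combination
of (extensions by zero of) place-permutation operators. -/
theorem perm_smash_closed [CharZero k] (hV : ¬ Module.Finite k V)
    (p q : ℕ) (σ : Perm (Fin p)) (τ : Perm (Fin q)) :
    smashOf k (LinearMap.mul' k (TensorAlgebra k V)) (tensorComul k V).toLinearMap
        (hatEnd k V (placePerm k V σ)) (hatEnd k V (placePerm k V τ)) ∈
      Submodule.span k
        {F : TensorAlgebra k V →ₗ[k] TensorAlgebra k V |
          ∃ (n : ℕ) (ρ : Perm (Fin n)), F = hatEnd k V (placePerm k V ρ)} := by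
  set S := smashOf k (LinearMap.mul' k (TensorAlgebra k V)) (tensorComul k V).toLinearMap
      (hatEnd k V (placePerm k V σ)) (hatEnd k V (placePerm k V τ)) with hSdef
  set G := ∑ m ∈ Finset.range (p + q + 1), Gpiece k V p q σ τ m with hGdef
  have core : ∀ (i : ℕ) (w : Fin i → V),
      S (TensorAlgebra.tprod k V i w) = G (TensorAlgebra.tprod k V i w) := by
    intro i w
    rw [hSdef, hGdef, smash_eval k V p q σ τ i w, LinearMap.sum_apply,
      Finset.sum_congr rfl (fun m _ => Gpiece_apply_tprod k V p q σ τ m i w),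
      Finset.sum_ite_eq' (Finset.range (p + q + 1)) i
        (fun _ => smashVal k V p q σ τ w)]
    by_cases hi : i ≤ p + q
    · rw [if_pos (by simp [Finset.mem_range]; omega)]
    · rw [if_neg (by simp [Finset.mem_range]; omega), smashVal_zero k V p q σ τ (by omega) w]
  have key : ∀ y : ⨁ i, ⨂[k]^i V,
      S (TensorAlgebra.ofDirectSum y) = G (TensorAlgebra.ofDirectSum y) := by
    intro y
    induction y using DirectSum.induction_on with
    | zero => simp
    | of i z =>
        induction z using PiTensorProduct.induction_on with
        | smul_tprod r w =>
            rw [← DirectSum.lof_eq_of k]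
            simp only [map_smul]
            rw [DirectSum.lof_eq_of, TensorAlgebra.ofDirectSum_of_tprod]
            rw [core i w]
        | add x y hx hy =>
            simp only [map_add, hx, hy]
    | add x y hx hy => simp only [map_add, hx, hy]
  have hSG : S = G := by
    apply LinearMap.ext
    intro x
    have := key (TensorAlgebra.toDirectSum x)
    rwa [TensorAlgebra.ofDirectSum_toDirectSum] at this
  rw [hSG, hGdef]
  apply Submodule.sum_mem
  intro m _
  rw [Gpiece]
  apply list_sum_mem
  intro F hF
  rw [List.mem_map] at hF
  obtain ⟨AB, hAB, rfl⟩ := hF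
  by_cases hA : AB.1.length = p
  · rw [if_pos hA]
    apply list_sum_mem
    intro F' hF'
    rw [List.mem_map] at hF'
    obtain ⟨CD, hCD, rfl⟩ := hF'
    by_cases hBC : (AB.2 ++ CD.1).length = q
    · rw [if_pos hBC]
      exact Submodule.subset_span ⟨m, _, rfl⟩
    · rw [if_neg hBC]
      exact Submodule.zero_mem _
  · rw [if_neg hA]
    exact Submodule.zero_mem _
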